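/- arXiv:2203.12422 — 9 statements merged into one kernel-verified Lean document; each statement's English description precedes it below -/
import Mathlib

section
/- The four acoustic pairs are eigenpairs of the Jacobian: A · R₁₊ = (u₁ + a₁) R₁₊, A · R₁₋ = (u₁ − a₁) R₁₋, A · R₂₊ = (u₂ + a₂) R₂₊ and A · R₂₋ = (u₂ − a₂) R₂₋. -/
/-!
The vectors `R₁₊, R₁₋` (resp. `R₂₊, R₂₋`) have vanishing `α₁`-component, so the first column of
the Jacobian, the only place where the mixture quantities `u`, `ρ`, `p₁ - p₂` enter, never
contributes. What remains is, for each phase `k`, the isentropic-Euler block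
`[[u_k, ρ_k], [a_k² / ρ_k, u_k]]` acting on `(1, c / ρ_k)`, which is an eigenvector with
eigenvalue `u_k + c` whenever `c² = a_k²`.
-/

noncomputable abbrev twoPhaseJacobian (x : Fin 5 → ℝ) (ρ₁ ρ₂ u₁ u₂ a₁ a₂ : ℝ) :
    Matrix (Fin 5) (Fin 5) ℝ :=
  !![x 0, 0, 0, 0, 0;
     x 1, u₁, 0, ρ₁, 0;
     x 2, 0, u₂, 0, ρ₂;
     x 3, a₁ ^ 2 / ρ₁, 0, u₁, 0;
     x 4, 0, a₂ ^ 2 / ρ₂, 0, u₂]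

theorem twoPhaseJacobian_mulVec_phase₁ (x : Fin 5 → ℝ) {ρ₁ a₁ c : ℝ} (ρ₂ u₁ u₂ a₂ : ℝ)
    (hρ₁ : ρ₁ ≠ 0) (hc : c ^ 2 = a₁ ^ 2) :
    (twoPhaseJacobian x ρ₁ ρ₂ u₁ u₂ a₁ a₂).mulVec ![0, 1, 0, c / ρ₁, 0] =
      (u₁ + c) • ![0, 1, 0, c / ρ₁, 0] := by
  ext i
  fin_cases i <;>
    simp only [Matrix.mulVec, dotProduct, Fin.sum_univ_five, Matrix.of_apply, Matrix.cons_val',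
      Matrix.cons_val_fin_one, Matrix.cons_val_zero, Matrix.cons_val_one, Matrix.cons_val,
      Fin.zero_eta, Fin.mk_one, Fin.reduceFinMk, Fin.isValue, Pi.smul_apply, smul_eq_mul,
      mul_zero, zero_mul, mul_one, add_zero, zero_add, add_right_inj] <;>
    field_simp
  linarith

theorem twoPhaseJacobian_mulVec_phase₂ (x : Fin 5 → ℝ) {ρ₂ a₂ c : ℝ} (ρ₁ u₁ u₂ a₁ : ℝ)
    (hρ₂ : ρ₂ ≠ 0) (hc : c ^ 2 = a₂ ^ 2) :
    (twoPhaseJacobian x ρ₁ ρ₂ u₁ u₂ a₁ a₂).mulVec ![0, 0, 1, 0, c / ρ₂] =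
      (u₂ + c) • ![0, 0, 1, 0, c / ρ₂] := by
  ext i
  fin_cases i <;>
    simp only [Matrix.mulVec, dotProduct, Fin.sum_univ_five, Matrix.of_apply, Matrix.cons_val',
      Matrix.cons_val_fin_one, Matrix.cons_val_zero, Matrix.cons_val_one, Matrix.cons_val,
      Fin.zero_eta, Fin.mk_one, Fin.reduceFinMk, Fin.isValue, Pi.smul_apply, smul_eq_mul,
      mul_zero, zero_mul, mul_one, add_zero, zero_add, add_right_inj] <;>
    field_simp
  linarith

theorem acoustic_eigenpairs_general
    (α₁ ρ₁ ρ₂ u₁ u₂ p₁ p₂ a₁ a₂ : ℝ)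
    (hρ₁ : 0 < ρ₁) (hρ₂ : 0 < ρ₂)
    (α₂ ρ u : ℝ)
    (A : Matrix (Fin 5) (Fin 5) ℝ)
    (hA : A = !![u, 0, 0, 0, 0;
                 ρ₁ / α₁ * (u₁ - u), u₁, 0, ρ₁, 0;
                 ρ₂ / α₂ * (u - u₂), 0, u₂, 0, ρ₂;
                 (p₁ - p₂) / ρ, a₁ ^ 2 / ρ₁, 0, u₁, 0;
                 (p₁ - p₂) / ρ, 0, a₂ ^ 2 / ρ₂, 0, u₂]) :
    A.mulVec ![0, 1, 0, a₁ / ρ₁, 0] = (u₁ + a₁) • ![0, 1, 0, a₁ / ρ₁, 0] ∧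
    A.mulVec ![0, 1, 0, -(a₁ / ρ₁), 0] = (u₁ - a₁) • ![0, 1, 0, -(a₁ / ρ₁), 0] ∧
    A.mulVec ![0, 0, 1, 0, a₂ / ρ₂] = (u₂ + a₂) • ![0, 0, 1, 0, a₂ / ρ₂] ∧
    A.mulVec ![0, 0, 1, 0, -(a₂ / ρ₂)] = (u₂ - a₂) • ![0, 0, 1, 0, -(a₂ / ρ₂)] := by
  obtain rfl : A = twoPhaseJacobian
      ![u, ρ₁ / α₁ * (u₁ - u), ρ₂ / α₂ * (u - u₂), (p₁ - p₂) / ρ, (p₁ - p₂) / ρ]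
      ρ₁ ρ₂ u₁ u₂ a₁ a₂ := hA
  simp only [← neg_div, sub_eq_add_neg]
  exact ⟨twoPhaseJacobian_mulVec_phase₁ _ _ _ _ _ hρ₁.ne' rfl,
    twoPhaseJacobian_mulVec_phase₁ _ _ _ _ _ hρ₁.ne' (neg_sq a₁),
    twoPhaseJacobian_mulVec_phase₂ _ _ _ _ _ hρ₂.ne' rfl,
    twoPhaseJacobian_mulVec_phase₂ _ _ _ _ _ hρ₂.ne' (neg_sq a₂)⟩

/-- The four acoustic pairs are eigenpairs of the Jacobian of the 1D barotropic
SHTC two-phase flow system in primitive variables. -/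
theorem acoustic_eigenpairs
    (α₁ ρ₁ ρ₂ u₁ u₂ p₁ p₂ a₁ a₂ : ℝ)
    (hα₁ : 0 < α₁) (hα₁' : α₁ < 1) (hρ₁ : 0 < ρ₁) (hρ₂ : 0 < ρ₂)
    (ha₁ : 0 < a₁) (ha₂ : 0 < a₂)
    (α₂ ρ c₁ c₂ u : ℝ)
    (hα₂ : α₂ = 1 - α₁) (hρ : ρ = α₁ * ρ₁ + α₂ * ρ₂)
    (hc₁ : c₁ = α₁ * ρ₁ / ρ) (hc₂ : c₂ = α₂ * ρ₂ / ρ)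
    (hu : u = c₁ * u₁ + c₂ * u₂)
    (A : Matrix (Fin 5) (Fin 5) ℝ)
    (hA : A = !![u, 0, 0, 0, 0;
                 ρ₁ / α₁ * (u₁ - u), u₁, 0, ρ₁, 0;
                 ρ₂ / α₂ * (u - u₂), 0, u₂, 0, ρ₂;
                 (p₁ - p₂) / ρ, a₁ ^ 2 / ρ₁, 0, u₁, 0;
                 (p₁ - p₂) / ρ, 0, a₂ ^ 2 / ρ₂, 0, u₂]) :
    A.mulVec ![0, 1, 0, a₁ / ρ₁, 0] = (u₁ + a₁) • ![0, 1, 0, a₁ / ρ₁, 0] ∧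
    A.mulVec ![0, 1, 0, -(a₁ / ρ₁), 0] = (u₁ - a₁) • ![0, 1, 0, -(a₁ / ρ₁), 0] ∧
    A.mulVec ![0, 0, 1, 0, a₂ / ρ₂] = (u₂ + a₂) • ![0, 0, 1, 0, a₂ / ρ₂] ∧
    A.mulVec ![0, 0, 1, 0, -(a₂ / ρ₂)] = (u₂ - a₂) • ![0, 0, 1, 0, -(a₂ / ρ₂)] :=
  acoustic_eigenpairs_general α₁ ρ₁ ρ₂ u₁ u₂ p₁ p₂ a₁ a₂ hρ₁ hρ₂ α₂ ρ u A hA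
end

section
/- The contact pair is an eigenpair of the Jacobian: A · R_C = u · R_C, where u = c₁u₁ + c₂u₂ is the mixture velocity. -/
/-!
The eigenvalue problem splits into one 2 × 3 block per phase: the rows of `ρₖ` and `uₖ` only see the
columns of `α₁`, `ρₖ` and `uₖ`, and on these the contact vector is `(εₖ, δₖ, (u - uₖ) γₖ)` scaled by
the other phase's `ε`. Phase 2 is phase 1 with `α₁` replaced by `-α₂` (and `γ` by `-γ`), so a single
pair of rational identities in the phase quantities does the whole job.
-/

section ContactPhase

variable {K : Type*} [Field K] {α ρₖ ρ Δp aₖ uₖ u δ ε γ : K}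

theorem contact_phase_density_row (hα : α ≠ 0) (hρₖ : ρₖ ≠ 0) (hρ : ρ ≠ 0)
    (hδ : δ = Δp / ρ - (u - uₖ) ^ 2 / α) (hε : ε = ((u - uₖ) ^ 2 - aₖ ^ 2) / ρₖ)
    (hγ : γ = (α * Δp - ρ * aₖ ^ 2) / (α * ρₖ * ρ)) :
    ρₖ / α * (uₖ - u) * ε + uₖ * δ + ρₖ * ((u - uₖ) * γ) = u * δ := by
  subst hδ hε hγ
  field_simp
  ring

theorem contact_phase_velocity_row (hα : α ≠ 0) (hρₖ : ρₖ ≠ 0) (hρ : ρ ≠ 0)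
    (hδ : δ = Δp / ρ - (u - uₖ) ^ 2 / α) (hε : ε = ((u - uₖ) ^ 2 - aₖ ^ 2) / ρₖ)
    (hγ : γ = (α * Δp - ρ * aₖ ^ 2) / (α * ρₖ * ρ)) :
    Δp / ρ * ε + aₖ ^ 2 / ρₖ * δ + uₖ * ((u - uₖ) * γ) = u * ((u - uₖ) * γ) := by
  subst hδ hε hγ
  field_simp
  ring

end ContactPhase

theorem contact_eigenpair_general
    (α₁ ρ₁ ρ₂ u₁ u₂ p₁ p₂ a₁ a₂ : ℝ)
    (hα₁ : 0 < α₁) (hα₁' : α₁ < 1) (hρ₁ : 0 < ρ₁) (hρ₂ : 0 < ρ₂)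
    (α₂ ρ u : ℝ)
    (hα₂ : α₂ = 1 - α₁) (hρ : ρ = α₁ * ρ₁ + α₂ * ρ₂)
    (δ₁ δ₂ ε₁ ε₂ γ₁ γ₂ : ℝ)
    (hδ₁ : δ₁ = (p₁ - p₂) / ρ - (u - u₁) ^ 2 / α₁)
    (hδ₂ : δ₂ = (p₁ - p₂) / ρ + (u - u₂) ^ 2 / α₂)
    (hε₁ : ε₁ = ((u - u₁) ^ 2 - a₁ ^ 2) / ρ₁)
    (hε₂ : ε₂ = ((u - u₂) ^ 2 - a₂ ^ 2) / ρ₂)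
    (hγ₁ : γ₁ = (α₁ * (p₁ - p₂) - ρ * a₁ ^ 2) / (α₁ * ρ₁ * ρ))
    (hγ₂ : γ₂ = -((α₂ * (p₁ - p₂) + ρ * a₂ ^ 2) / (α₂ * ρ₂ * ρ)))
    (A : Matrix (Fin 5) (Fin 5) ℝ)
    (hA : A = !![u, 0, 0, 0, 0;
                 ρ₁ / α₁ * (u₁ - u), u₁, 0, ρ₁, 0;
                 ρ₂ / α₂ * (u - u₂), 0, u₂, 0, ρ₂;
                 (p₁ - p₂) / ρ, a₁ ^ 2 / ρ₁, 0, u₁, 0;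
                 (p₁ - p₂) / ρ, 0, a₂ ^ 2 / ρ₂, 0, u₂]) :
    A.mulVec ![ε₁ * ε₂, δ₁ * ε₂, δ₂ * ε₁, (u - u₁) * ε₂ * γ₁, -((u - u₂) * ε₁ * γ₂)]
      = u • ![ε₁ * ε₂, δ₁ * ε₂, δ₂ * ε₁, (u - u₁) * ε₂ * γ₁, -((u - u₂) * ε₁ * γ₂)] := by
  have hα₂_pos : 0 < α₂ := by linarith
  have hα₂_neg_ne : -α₂ ≠ 0 := neg_ne_zero.2 hα₂_pos.ne'
  have hρ_ne : ρ ≠ 0 := by rw [hρ]; positivity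
  have hδ₂' : δ₂ = (p₁ - p₂) / ρ - (u - u₂) ^ 2 / -α₂ := by rw [hδ₂, div_neg, sub_neg_eq_add]
  have hγ₂' : -γ₂ = (-α₂ * (p₁ - p₂) - ρ * a₂ ^ 2) / (-α₂ * ρ₂ * ρ) := by rw [hγ₂]; ring
  have density₁ := contact_phase_density_row hα₁.ne' hρ₁.ne' hρ_ne hδ₁ hε₁ hγ₁
  have velocity₁ := contact_phase_velocity_row hα₁.ne' hρ₁.ne' hρ_ne hδ₁ hε₁ hγ₁
  have density₂ := contact_phase_density_row hα₂_neg_ne hρ₂.ne' hρ_ne hδ₂' hε₂ hγ₂'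
  have velocity₂ := contact_phase_velocity_row hα₂_neg_ne hρ₂.ne' hρ_ne hδ₂' hε₂ hγ₂'
  subst hA
  ext i
  fin_cases i <;>
    simp only [Matrix.mulVec, dotProduct, Fin.sum_univ_five, Fin.reduceFinMk, Fin.zero_eta, Fin.mk_one,
      Fin.isValue, Matrix.of_apply, Matrix.cons_val', Matrix.cons_val_fin_one, Matrix.cons_val,
      Matrix.cons_val_zero, Matrix.cons_val_one, Pi.smul_apply, smul_eq_mul]
  · ring
  · linear_combination ε₂ * density₁
  · linear_combination ε₁ * density₂
  · linear_combination ε₂ * velocity₁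
  · linear_combination ε₁ * velocity₂

/-- The contact pair is an eigenpair of the Jacobian of the 1D barotropic
SHTC two-phase flow system: A · R_C = u · R_C where u is the mixture velocity. -/
theorem contact_eigenpair
    (α₁ ρ₁ ρ₂ u₁ u₂ p₁ p₂ a₁ a₂ : ℝ)
    (hα₁ : 0 < α₁) (hα₁' : α₁ < 1) (hρ₁ : 0 < ρ₁) (hρ₂ : 0 < ρ₂)
    (ha₁ : 0 < a₁) (ha₂ : 0 < a₂)
    (α₂ ρ c₁ c₂ u : ℝ)
    (hα₂ : α₂ = 1 - α₁) (hρ : ρ = α₁ * ρ₁ + α₂ * ρ₂)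
    (hc₁ : c₁ = α₁ * ρ₁ / ρ) (hc₂ : c₂ = α₂ * ρ₂ / ρ)
    (hu : u = c₁ * u₁ + c₂ * u₂)
    (δ₁ δ₂ ε₁ ε₂ γ₁ γ₂ : ℝ)
    (hδ₁ : δ₁ = (p₁ - p₂) / ρ - (u - u₁) ^ 2 / α₁)
    (hδ₂ : δ₂ = (p₁ - p₂) / ρ + (u - u₂) ^ 2 / α₂)
    (hε₁ : ε₁ = ((u - u₁) ^ 2 - a₁ ^ 2) / ρ₁)
    (hε₂ : ε₂ = ((u - u₂) ^ 2 - a₂ ^ 2) / ρ₂)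
    (hγ₁ : γ₁ = (α₁ * (p₁ - p₂) - ρ * a₁ ^ 2) / (α₁ * ρ₁ * ρ))
    (hγ₂ : γ₂ = -((α₂ * (p₁ - p₂) + ρ * a₂ ^ 2) / (α₂ * ρ₂ * ρ)))
    (A : Matrix (Fin 5) (Fin 5) ℝ)
    (hA : A = !![u, 0, 0, 0, 0;
                 ρ₁ / α₁ * (u₁ - u), u₁, 0, ρ₁, 0;
                 ρ₂ / α₂ * (u - u₂), 0, u₂, 0, ρ₂;
                 (p₁ - p₂) / ρ, a₁ ^ 2 / ρ₁, 0, u₁, 0;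
                 (p₁ - p₂) / ρ, 0, a₂ ^ 2 / ρ₂, 0, u₂]) :
    A.mulVec ![ε₁ * ε₂, δ₁ * ε₂, δ₂ * ε₁, (u - u₁) * ε₂ * γ₁, -((u - u₂) * ε₁ * γ₂)]
      = u • ![ε₁ * ε₂, δ₁ * ε₂, δ₂ * ε₁, (u - u₁) * ε₂ * γ₁, -((u - u₂) * ε₁ * γ₂)] :=
  contact_eigenpair_general α₁ ρ₁ ρ₂ u₁ u₂ p₁ p₂ a₁ a₂ hα₁ hα₁' hρ₁ hρ₂ α₂ ρ u hα₂ hρ δ₁ δ₂ ε₁ ε₂ γ₁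
    γ₂ hδ₁ hδ₂ hε₁ hε₂ hγ₁ hγ₂ A hA
end

section
/- The contact field (λ_C, R_C) is linearly degenerate: the gradient of the eigenvalue λ_C = c₁u₁ + c₂u₂ with respect to (α₁,ρ₁,ρ₂,u₁,u₂), namely the vector ((ρ₁ρ₂/ρ²)(u₁−u₂), (α₁c₂/ρ)(u₁−u₂), (α₂c₁/ρ)(u₂−u₁), c₁, c₂), has vanishing dot product with R_C; that is, (ρ₁ρ₂/ρ²)(u₁−u₂)·ε₁ε₂ + (α₁c₂(u₁−u₂)/ρ)·δ₁ε₂ + (α₂c₁(u₂−u₁)/ρ)·δ₂ε₁ + c₁·(u−u₁)ε₂γ₁ − c₂·(u−u₂)ε₁γ₂ = 0. -/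
/-!
Write `w = u₁ - u₂`. Since the mass fractions sum to one, `u - u₁ = -c₂ w` and `u - u₂ = c₁ w`.
In each phase the pressure jump `p₁ - p₂` enters `δᵢ` and `γᵢ` with opposite signs and cancels,
so the second and fourth terms add up to `-(c₂ ρ₁ / ρ) w ε₁ ε₂` and the third and fifth to
`-(c₁ ρ₂ / ρ) w ε₁ ε₂`. The sum then vanishes because the mixture specific volume is the
mass-weighted mean of the phase specific volumes, `c₁ / ρ₁ + c₂ / ρ₂ = 1 / ρ`.
-/

section Mixture

variable {K : Type*} [Field K]

theorem mass_fraction_add_mass_fraction {α₁ α₂ ρ₁ ρ₂ ρ : K} (hρ : ρ = α₁ * ρ₁ + α₂ * ρ₂)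
    (hρ₀ : ρ ≠ 0) : α₁ * ρ₁ / ρ + α₂ * ρ₂ / ρ = 1 := by
  rw [← add_div, ← hρ, div_self hρ₀]

/-- `c₁ / ρ₁ + c₂ / ρ₂ = 1 / ρ` with the denominators cleared. -/
theorem mass_fraction_mul_add_mass_fraction_mul {α₁ α₂ ρ₁ ρ₂ ρ : K} (hα : α₁ + α₂ = 1) :
    α₁ * ρ₁ / ρ * ρ₂ + α₂ * ρ₂ / ρ * ρ₁ = ρ₁ * ρ₂ / ρ := by
  linear_combination ρ₁ * ρ₂ / ρ * hα

theorem mixture_velocity_sub_left {c₁ c₂ u₁ u₂ u : K} (hc : c₁ + c₂ = 1)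
    (hu : u = c₁ * u₁ + c₂ * u₂) : u - u₁ = -(c₂ * (u₁ - u₂)) := by
  linear_combination hu + u₁ * hc

/-- One phase of the contact field: `α` and `r` are its volume fraction and density, `c = α r / ρ`
its mass fraction, `c'` the mass fraction of the other phase, `v = -c' w` its velocity relative to
the mixture and `Δp` the pressure jump towards the other phase. -/
theorem phase_pressure_cancel {α r ρ c c' w v Δp a : K} (hα : α ≠ 0) (hr : r ≠ 0) (hρ : ρ ≠ 0)
    (hc : c = α * r / ρ) (hv : v = -(c' * w)) :
    α * c' * w / ρ * (Δp / ρ - v ^ 2 / α) + c * (v * ((α * Δp - ρ * a ^ 2) / (α * r * ρ)))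
      = -(c' * w * (v ^ 2 - a ^ 2) / ρ) := by
  subst hc hv
  field_simp
  ring

end Mixture

theorem contact_field_linearly_degenerate_general
    (α₁ ρ₁ ρ₂ u₁ u₂ p₁ p₂ a₁ a₂ : ℝ)
    (hα₁ : 0 < α₁) (hα₁' : α₁ < 1) (hρ₁ : 0 < ρ₁) (hρ₂ : 0 < ρ₂)
    (α₂ ρ c₁ c₂ u : ℝ)
    (hα₂ : α₂ = 1 - α₁) (hρ : ρ = α₁ * ρ₁ + α₂ * ρ₂)
    (hc₁ : c₁ = α₁ * ρ₁ / ρ) (hc₂ : c₂ = α₂ * ρ₂ / ρ)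
    (hu : u = c₁ * u₁ + c₂ * u₂)
    (δ₁ δ₂ ε₁ ε₂ γ₁ γ₂ : ℝ)
    (hδ₁ : δ₁ = (p₁ - p₂) / ρ - (u - u₁) ^ 2 / α₁)
    (hδ₂ : δ₂ = (p₁ - p₂) / ρ + (u - u₂) ^ 2 / α₂)
    (hε₁ : ε₁ = ((u - u₁) ^ 2 - a₁ ^ 2) / ρ₁)
    (hε₂ : ε₂ = ((u - u₂) ^ 2 - a₂ ^ 2) / ρ₂)
    (hγ₁ : γ₁ = (α₁ * (p₁ - p₂) - ρ * a₁ ^ 2) / (α₁ * ρ₁ * ρ))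
    (hγ₂ : γ₂ = -((α₂ * (p₁ - p₂) + ρ * a₂ ^ 2) / (α₂ * ρ₂ * ρ))) :
    ρ₁ * ρ₂ / ρ ^ 2 * (u₁ - u₂) * (ε₁ * ε₂)
      + α₁ * c₂ * (u₁ - u₂) / ρ * (δ₁ * ε₂)
      + α₂ * c₁ * (u₂ - u₁) / ρ * (δ₂ * ε₁)
      + c₁ * ((u - u₁) * ε₂ * γ₁)
      - c₂ * ((u - u₂) * ε₁ * γ₂) = 0 := by
  have hα₂₀ : 0 < α₂ := by linarith
  have hρ₀ : ρ ≠ 0 := by rw [hρ]; positivity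
  have hc : c₁ + c₂ = 1 := hc₁ ▸ hc₂ ▸ mass_fraction_add_mass_fraction hρ hρ₀
  have hv₁ := mixture_velocity_sub_left hc hu
  have hv₂ : u - u₂ = -(c₁ * (u₂ - u₁)) :=
    mixture_velocity_sub_left (by rw [add_comm, hc]) (by rw [hu, add_comm])
  have hE₁ : (u - u₁) ^ 2 - a₁ ^ 2 = ρ₁ * ε₁ := by rw [hε₁, mul_div_cancel₀ _ hρ₁.ne']
  have hE₂ : (u - u₂) ^ 2 - a₂ ^ 2 = ρ₂ * ε₂ := by rw [hε₂, mul_div_cancel₀ _ hρ₂.ne']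
  have phase₁ := phase_pressure_cancel (Δp := p₁ - p₂) (a := a₁) hα₁.ne' hρ₁.ne' hρ₀ hc₁ hv₁
  have phase₂ := phase_pressure_cancel (Δp := p₂ - p₁) (a := a₂) hα₂₀.ne' hρ₂.ne' hρ₀ hc₂ hv₂
  rw [hE₁] at phase₁
  rw [hE₂] at phase₂
  have volume : c₁ * ρ₂ + c₂ * ρ₁ = ρ₁ * ρ₂ / ρ :=
    hc₁ ▸ hc₂ ▸ mass_fraction_mul_add_mass_fraction_mul (by linarith)
  subst hδ₁ hδ₂ hγ₁ hγ₂
  linear_combination ε₂ * phase₁ - ε₁ * phase₂ - (u₁ - u₂) * ε₁ * ε₂ / ρ * volume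

/-- The contact field (λ_C, R_C) of the barotropic SHTC two-phase flow system is
linearly degenerate: ∇λ_C · R_C = 0. -/
theorem contact_field_linearly_degenerate
    (α₁ ρ₁ ρ₂ u₁ u₂ p₁ p₂ a₁ a₂ : ℝ)
    (hα₁ : 0 < α₁) (hα₁' : α₁ < 1) (hρ₁ : 0 < ρ₁) (hρ₂ : 0 < ρ₂)
    (ha₁ : 0 < a₁) (ha₂ : 0 < a₂)
    (α₂ ρ c₁ c₂ u : ℝ)
    (hα₂ : α₂ = 1 - α₁) (hρ : ρ = α₁ * ρ₁ + α₂ * ρ₂)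
    (hc₁ : c₁ = α₁ * ρ₁ / ρ) (hc₂ : c₂ = α₂ * ρ₂ / ρ)
    (hu : u = c₁ * u₁ + c₂ * u₂)
    (δ₁ δ₂ ε₁ ε₂ γ₁ γ₂ : ℝ)
    (hδ₁ : δ₁ = (p₁ - p₂) / ρ - (u - u₁) ^ 2 / α₁)
    (hδ₂ : δ₂ = (p₁ - p₂) / ρ + (u - u₂) ^ 2 / α₂)
    (hε₁ : ε₁ = ((u - u₁) ^ 2 - a₁ ^ 2) / ρ₁)
    (hε₂ : ε₂ = ((u - u₂) ^ 2 - a₂ ^ 2) / ρ₂)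
    (hγ₁ : γ₁ = (α₁ * (p₁ - p₂) - ρ * a₁ ^ 2) / (α₁ * ρ₁ * ρ))
    (hγ₂ : γ₂ = -((α₂ * (p₁ - p₂) + ρ * a₂ ^ 2) / (α₂ * ρ₂ * ρ))) :
    ρ₁ * ρ₂ / ρ ^ 2 * (u₁ - u₂) * (ε₁ * ε₂)
      + α₁ * c₂ * (u₁ - u₂) / ρ * (δ₁ * ε₂)
      + α₂ * c₁ * (u₂ - u₁) / ρ * (δ₂ * ε₁)
      + c₁ * ((u - u₁) * ε₂ * γ₁)
      - c₂ * ((u - u₂) * ε₁ * γ₂) = 0 :=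
  contact_field_linearly_degenerate_general α₁ ρ₁ ρ₂ u₁ u₂ p₁ p₂ a₁ a₂ hα₁ hα₁' hρ₁ hρ₂ α₂ ρ c₁ c₂ u
    hα₂ hρ hc₁ hc₂ hu δ₁ δ₂ ε₁ ε₂ γ₁ γ₂ hδ₁ hδ₂ hε₁ hε₂ hγ₁ hγ₂
end

section
/- Coincidence of eigenvectors and eigenvalues: assume (u−u₂)² ≠ a₂². Then R_C lies in the linear span of R₁₊ and R₁₋ (equivalently, in the subspace of vectors of ℝ⁵ whose first, third and fifth components vanish) if and only if (u−u₁)² = a₁², i.e. if and only if the contact eigenvalue λ_C = u coincides with one of the phase-1 acoustic eigenvalues u₁ + a₁ or u₁ − a₁. -/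
/-! The span of R₁₊ and R₁₋ is the set of vectors whose first, third and fifth components vanish
(the fourth entries ±a₁/ρ₁ are nonzero). Those three components of R_C all carry the factor ε₁,
and the first is ε₁ε₂ with ε₂ ≠ 0 by the resonance hypothesis, so R_C lies in the span exactly
when ε₁ = 0, i.e. when (u − u₁)² = a₁². -/

theorem mem_span_pair_iff_coords_eq_zero {K : Type*} [Field K] [NeZero (2 : K)] {s : K}
    (hs : s ≠ 0) (v : Fin 5 → K) :
    v ∈ Submodule.span K ({![0, 1, 0, s, 0], ![0, 1, 0, -s, 0]} : Set (Fin 5 → K)) ↔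
      v 0 = 0 ∧ v 2 = 0 ∧ v 4 = 0 := by
  rw [Submodule.mem_span_pair]
  constructor
  · rintro ⟨c, d, rfl⟩
    simp
  · rintro ⟨h0, h2, h4⟩
    refine ⟨(v 1 + v 3 / s) / 2, (v 1 - v 3 / s) / 2, ?_⟩
    ext i
    fin_cases i <;> simp [h0, h2, h4] <;> field_simp <;> ring

theorem sub_sq_eq_sq_iff {R : Type*} [CommRing R] [NoZeroDivisors R] (x y a : R) :
    (x - y) ^ 2 = a ^ 2 ↔ x = y + a ∨ x = y - a := by
  rw [sq_eq_sq_iff_eq_or_eq_neg, sub_eq_iff_eq_add', sub_eq_iff_eq_add', ← sub_eq_add_neg]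

theorem contact_eigenvector_coincidence_general
    (ρ₁ ρ₂ u₁ u₂ a₁ a₂ : ℝ)
    (hρ₁ : 0 < ρ₁) (hρ₂ : 0 < ρ₂)
    (ha₁ : 0 < a₁)
    (u : ℝ)
    (δ₁ δ₂ ε₁ ε₂ γ₁ γ₂ : ℝ)
    (hε₁ : ε₁ = ((u - u₁) ^ 2 - a₁ ^ 2) / ρ₁)
    (hε₂ : ε₂ = ((u - u₂) ^ 2 - a₂ ^ 2) / ρ₂)
    (hres : (u - u₂) ^ 2 ≠ a₂ ^ 2) :
    (![ε₁ * ε₂, δ₁ * ε₂, δ₂ * ε₁, (u - u₁) * ε₂ * γ₁, -((u - u₂) * ε₁ * γ₂)]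
        ∈ Submodule.span ℝ
          ({![0, 1, 0, a₁ / ρ₁, 0], ![0, 1, 0, -(a₁ / ρ₁), 0]} : Set (Fin 5 → ℝ))
      ↔ (u - u₁) ^ 2 = a₁ ^ 2)
    ∧ ((u - u₁) ^ 2 = a₁ ^ 2 ↔ (u = u₁ + a₁ ∨ u = u₁ - a₁)) := by
  have hε₂_ne : ε₂ ≠ 0 := hε₂ ▸ div_ne_zero (sub_ne_zero.mpr hres) hρ₂.ne'
  have hε₁_eq_zero : ε₁ = 0 ↔ (u - u₁) ^ 2 = a₁ ^ 2 := by
    rw [hε₁, div_eq_zero_iff, sub_eq_zero, or_iff_left hρ₁.ne']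
  refine ⟨?_, sub_sq_eq_sq_iff u u₁ a₁⟩
  rw [mem_span_pair_iff_coords_eq_zero (div_ne_zero ha₁.ne' hρ₁.ne'), ← hε₁_eq_zero]
  simp +contextual [hε₂_ne]

/-- Coincidence of eigenvectors and eigenvalues: if (u−u₂)² ≠ a₂², then the contact
eigenvector R_C lies in the span of the phase-1 acoustic eigenvectors R₁₊, R₁₋ iff
(u−u₁)² = a₁², i.e. iff the contact eigenvalue u coincides with u₁ + a₁ or u₁ − a₁. -/
theorem contact_eigenvector_coincidence
    (α₁ ρ₁ ρ₂ u₁ u₂ p₁ p₂ a₁ a₂ : ℝ)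
    (hα₁ : 0 < α₁) (hα₁' : α₁ < 1) (hρ₁ : 0 < ρ₁) (hρ₂ : 0 < ρ₂)
    (ha₁ : 0 < a₁) (ha₂ : 0 < a₂)
    (α₂ ρ c₁ c₂ u : ℝ)
    (hα₂ : α₂ = 1 - α₁) (hρ : ρ = α₁ * ρ₁ + α₂ * ρ₂)
    (hc₁ : c₁ = α₁ * ρ₁ / ρ) (hc₂ : c₂ = α₂ * ρ₂ / ρ)
    (hu : u = c₁ * u₁ + c₂ * u₂)
    (δ₁ δ₂ ε₁ ε₂ γ₁ γ₂ : ℝ)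
    (hδ₁ : δ₁ = (p₁ - p₂) / ρ - (u - u₁) ^ 2 / α₁)
    (hδ₂ : δ₂ = (p₁ - p₂) / ρ + (u - u₂) ^ 2 / α₂)
    (hε₁ : ε₁ = ((u - u₁) ^ 2 - a₁ ^ 2) / ρ₁)
    (hε₂ : ε₂ = ((u - u₂) ^ 2 - a₂ ^ 2) / ρ₂)
    (hγ₁ : γ₁ = (α₁ * (p₁ - p₂) - ρ * a₁ ^ 2) / (α₁ * ρ₁ * ρ))
    (hγ₂ : γ₂ = -((α₂ * (p₁ - p₂) + ρ * a₂ ^ 2) / (α₂ * ρ₂ * ρ)))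
    (hres : (u - u₂) ^ 2 ≠ a₂ ^ 2) :
    (![ε₁ * ε₂, δ₁ * ε₂, δ₂ * ε₁, (u - u₁) * ε₂ * γ₁, -((u - u₂) * ε₁ * γ₂)]
        ∈ Submodule.span ℝ
          ({![0, 1, 0, a₁ / ρ₁, 0], ![0, 1, 0, -(a₁ / ρ₁), 0]} : Set (Fin 5 → ℝ))
      ↔ (u - u₁) ^ 2 = a₁ ^ 2)
    ∧ ((u - u₁) ^ 2 = a₁ ^ 2 ↔ (u = u₁ + a₁ ∨ u = u₁ - a₁)) :=
  contact_eigenvector_coincidence_general ρ₁ ρ₂ u₁ u₂ a₁ a₂ hρ₁ hρ₂ ha₁ u δ₁ δ₂ ε₁ ε₂ γ₁ γ₂ hε₁ hε₂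
    hres
end

section
/- Hyperbolicity away from resonance: if (u−u₁)² ≠ a₁² and (u−u₂)² ≠ a₂², then the five vectors R₁₊, R₁₋, R₂₊, R₂₋, R_C are linearly independent in ℝ⁵ (so the Jacobian of the system possesses a full basis of eigenvectors). -/
/-! The acoustic eigenvectors `R₁±`, `R₂±` vanish in the first coordinate and, since `aₖ/ρₖ ≠ 0`,
span the last four coordinates; `R_C` has first coordinate `ε₁ε₂`, which is nonzero away from
resonance. Equivalently, the determinant of the five vectors is `-4 (a₁/ρ₁) (a₂/ρ₂) ε₁ε₂`. -/

theorem det_acousticEigenvectors {R : Type*} [CommRing R] (x y : R) (v : Fin 5 → R) :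
    (Matrix.of ![![0, 1, 0, x, 0], ![0, 1, 0, -x, 0], ![0, 0, 1, 0, y], ![0, 0, 1, 0, -y], v]).det
      = -4 * x * y * v 0 := by
  simp [Matrix.det_succ_row_zero, Fin.sum_univ_succ, Fin.succAbove, Fin.castSucc, Fin.castAdd,
    Fin.castLE]
  ring

theorem linearIndependent_acousticEigenvectors {K : Type*} [Field K] [CharZero K] {x y : K}
    (hx : x ≠ 0) (hy : y ≠ 0) {v : Fin 5 → K} (hv : v 0 ≠ 0) :
    LinearIndependent K ![![0, 1, 0, x, 0], ![0, 1, 0, -x, 0], ![0, 0, 1, 0, y],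
      ![0, 0, 1, 0, -y], v] := by
  refine (Matrix.linearIndependent_rows_iff_isUnit (A := Matrix.of ![![0, 1, 0, x, 0],
    ![0, 1, 0, -x, 0], ![0, 0, 1, 0, y], ![0, 0, 1, 0, -y], v])).2 ?_
  rw [Matrix.isUnit_iff_isUnit_det, isUnit_iff_ne_zero, det_acousticEigenvectors]
  have h4 : (-4 : K) ≠ 0 := by norm_num
  exact mul_ne_zero (mul_ne_zero (mul_ne_zero h4 hx) hy) hv

theorem eigenvectors_linearly_independent_general
    (ρ₁ ρ₂ u₁ u₂ a₁ a₂ : ℝ)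
    (hρ₁ : 0 < ρ₁) (hρ₂ : 0 < ρ₂)
    (ha₁ : 0 < a₁) (ha₂ : 0 < a₂)
    (u : ℝ)
    (δ₁ δ₂ ε₁ ε₂ γ₁ γ₂ : ℝ)
    (hε₁ : ε₁ = ((u - u₁) ^ 2 - a₁ ^ 2) / ρ₁)
    (hε₂ : ε₂ = ((u - u₂) ^ 2 - a₂ ^ 2) / ρ₂)
    (hres₁ : (u - u₁) ^ 2 ≠ a₁ ^ 2) (hres₂ : (u - u₂) ^ 2 ≠ a₂ ^ 2) :
    LinearIndependent ℝ
      ![![0, 1, 0, a₁ / ρ₁, 0],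
        ![0, 1, 0, -(a₁ / ρ₁), 0],
        ![0, 0, 1, 0, a₂ / ρ₂],
        ![0, 0, 1, 0, -(a₂ / ρ₂)],
        ![ε₁ * ε₂, δ₁ * ε₂, δ₂ * ε₁, (u - u₁) * ε₂ * γ₁, -((u - u₂) * ε₁ * γ₂)]] := by
  have hε₁_ne : ε₁ ≠ 0 := hε₁ ▸ div_ne_zero (sub_ne_zero.2 hres₁) hρ₁.ne'
  have hε₂_ne : ε₂ ≠ 0 := hε₂ ▸ div_ne_zero (sub_ne_zero.2 hres₂) hρ₂.ne'
  exact linearIndependent_acousticEigenvectors (div_pos ha₁ hρ₁).ne' (div_pos ha₂ hρ₂).ne'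
    (v := ![_, _, _, _, _]) (mul_ne_zero hε₁_ne hε₂_ne)

/-- Hyperbolicity away from resonance: if (u−u₁)² ≠ a₁² and (u−u₂)² ≠ a₂², the five
eigenvectors R₁₊, R₁₋, R₂₊, R₂₋, R_C of the barotropic SHTC system are linearly
independent in ℝ⁵. -/
theorem eigenvectors_linearly_independent
    (α₁ ρ₁ ρ₂ u₁ u₂ p₁ p₂ a₁ a₂ : ℝ)
    (hα₁ : 0 < α₁) (hα₁' : α₁ < 1) (hρ₁ : 0 < ρ₁) (hρ₂ : 0 < ρ₂)
    (ha₁ : 0 < a₁) (ha₂ : 0 < a₂)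
    (α₂ ρ c₁ c₂ u : ℝ)
    (hα₂ : α₂ = 1 - α₁) (hρ : ρ = α₁ * ρ₁ + α₂ * ρ₂)
    (hc₁ : c₁ = α₁ * ρ₁ / ρ) (hc₂ : c₂ = α₂ * ρ₂ / ρ)
    (hu : u = c₁ * u₁ + c₂ * u₂)
    (δ₁ δ₂ ε₁ ε₂ γ₁ γ₂ : ℝ)
    (hδ₁ : δ₁ = (p₁ - p₂) / ρ - (u - u₁) ^ 2 / α₁)
    (hδ₂ : δ₂ = (p₁ - p₂) / ρ + (u - u₂) ^ 2 / α₂)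
    (hε₁ : ε₁ = ((u - u₁) ^ 2 - a₁ ^ 2) / ρ₁)
    (hε₂ : ε₂ = ((u - u₂) ^ 2 - a₂ ^ 2) / ρ₂)
    (hγ₁ : γ₁ = (α₁ * (p₁ - p₂) - ρ * a₁ ^ 2) / (α₁ * ρ₁ * ρ))
    (hγ₂ : γ₂ = -((α₂ * (p₁ - p₂) + ρ * a₂ ^ 2) / (α₂ * ρ₂ * ρ)))
    (hres₁ : (u - u₁) ^ 2 ≠ a₁ ^ 2) (hres₂ : (u - u₂) ^ 2 ≠ a₂ ^ 2) :
    LinearIndependent ℝ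
      ![![0, 1, 0, a₁ / ρ₁, 0],
        ![0, 1, 0, -(a₁ / ρ₁), 0],
        ![0, 0, 1, 0, a₂ / ρ₂],
        ![0, 0, 1, 0, -(a₂ / ρ₂)],
        ![ε₁ * ε₂, δ₁ * ε₂, δ₂ * ε₁, (u - u₁) * ε₂ * γ₁, -((u - u₂) * ε₁ * γ₂)]] :=
  eigenvectors_linearly_independent_general ρ₁ ρ₂ u₁ u₂ a₁ a₂ hρ₁ hρ₂ ha₁ ha₂ u δ₁ δ₂ ε₁ ε₂ γ₁ γ₂
    hε₁ hε₂ hres₁ hres₂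
end

section
/- Vanishing criterion for the determinant of the mass-flux system: let α₁ ∈ (0,1), α₂ = 1−α₁, and ρ₁L, ρ₁R, ρ₂L, ρ₂R > 0. Then det := −½(α₁(1/ρ₁L − 1/ρ₁R)(1/ρ₂L² − 1/ρ₂R²) + α₂(1/ρ₁L² − 1/ρ₁R²)(1/ρ₂L − 1/ρ₂R)) = 0 if and only if ρ₁L = ρ₁R or ρ₂L = ρ₂R. In particular, if both phase densities jump across the shock, the 2×2 linear system for the squared partial mass fluxes is uniquely solvable. -/
/-!
In the specific volumes `τ = 1/ρ` the determinant factors, via `x² - y² = (x - y)(x + y)`, as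
`-½ ⟦τ₁⟧ ⟦τ₂⟧ (α₁ (τ₂L + τ₂R) + α₂ (τ₁L + τ₁R))`. The last factor is positive, and `ρ ↦ 1/ρ` is
injective, so the determinant vanishes exactly when one of the densities does not jump.
-/

theorem jump_mul_jump_sq_add_jump_sq_mul_jump {R : Type*} [CommRing R]
    (α₁ α₂ τ₁L τ₁R τ₂L τ₂R : R) :
    α₁ * (τ₁L - τ₁R) * (τ₂L ^ 2 - τ₂R ^ 2) + α₂ * (τ₁L ^ 2 - τ₁R ^ 2) * (τ₂L - τ₂R)
      = (τ₁L - τ₁R) * (τ₂L - τ₂R) * (α₁ * (τ₂L + τ₂R) + α₂ * (τ₁L + τ₁R)) := by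
  ring

theorem jump_mul_jump_sq_add_jump_sq_mul_jump_eq_zero_iff {K : Type*} [Field K] [LinearOrder K]
    [IsStrictOrderedRing K] {α₁ α₂ τ₁L τ₁R τ₂L τ₂R : K} (hα₁ : 0 < α₁) (hα₂ : 0 < α₂)
    (hτ₁L : 0 < τ₁L) (hτ₁R : 0 < τ₁R) (hτ₂L : 0 < τ₂L) (hτ₂R : 0 < τ₂R) :
    α₁ * (τ₁L - τ₁R) * (τ₂L ^ 2 - τ₂R ^ 2) + α₂ * (τ₁L ^ 2 - τ₁R ^ 2) * (τ₂L - τ₂R) = 0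
      ↔ τ₁L = τ₁R ∨ τ₂L = τ₂R := by
  have hweight : 0 < α₁ * (τ₂L + τ₂R) + α₂ * (τ₁L + τ₁R) := by positivity
  rw [jump_mul_jump_sq_add_jump_sq_mul_jump, mul_eq_zero, mul_eq_zero, sub_eq_zero, sub_eq_zero]
  simp only [hweight.ne', or_false]

/-- Vanishing criterion for the determinant of the mass-flux system: det(M) = 0 iff one
of the phase densities does not jump; in particular if both phase densities jump the
system is uniquely solvable. -/
theorem mass_flux_determinant_vanishing
    (α₁ α₂ : ℝ) (hα₁ : 0 < α₁) (hα₁' : α₁ < 1) (hα₂ : α₂ = 1 - α₁)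
    (ρ₁L ρ₁R ρ₂L ρ₂R : ℝ)
    (hρ₁L : 0 < ρ₁L) (hρ₁R : 0 < ρ₁R) (hρ₂L : 0 < ρ₂L) (hρ₂R : 0 < ρ₂R)
    (det : ℝ)
    (hdet : det = -(1 / 2) * (α₁ * (1 / ρ₁L - 1 / ρ₁R) * (1 / ρ₂L ^ 2 - 1 / ρ₂R ^ 2)
        + α₂ * (1 / ρ₁L ^ 2 - 1 / ρ₁R ^ 2) * (1 / ρ₂L - 1 / ρ₂R))) :
    (det = 0 ↔ (ρ₁L = ρ₁R ∨ ρ₂L = ρ₂R))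
    ∧ (ρ₁L ≠ ρ₁R → ρ₂L ≠ ρ₂R → det ≠ 0) := by
  have hα₂_pos : 0 < α₂ := by linarith
  have hdet_zero : det = 0 ↔ ρ₁L = ρ₁R ∨ ρ₂L = ρ₂R := by
    rw [hdet, mul_eq_zero, ← one_div_pow, ← one_div_pow, ← one_div_pow, ← one_div_pow,
      jump_mul_jump_sq_add_jump_sq_mul_jump_eq_zero_iff hα₁ hα₂_pos (by positivity)
        (by positivity) (by positivity) (by positivity)]
    simp only [one_div, inv_inj]
    norm_num
  exact ⟨hdet_zero, fun h₁ h₂ h => (hdet_zero.mp h).elim h₁ h₂⟩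
end

section
/- Both phase densities must jump across a shock (appendix lemma): let Ψ : (0,∞) → ℝ be strictly monotone increasing (e.g. differentiable with Ψ'(r) = a(r)²/r for a sound speed a(r) > 0). Let ρ⁻, ρ⁺ > 0, p⁻, p⁺ ∈ ℝ and Q ∈ ℝ satisfy the reduced jump conditions Q²(1/ρ⁻ − 1/ρ⁺) + (p⁻ − p⁺) = 0 and (Q²/2)(1/ρ⁻² − 1/ρ⁺²) − (Ψ(ρ⁻) − Ψ(ρ⁺)) = 0, as well as (Ψ(ρ⁻) − Ψ(ρ⁺)) − ½(p⁻ − p⁺)(1/ρ⁺ + 1/ρ⁻) = 0. Then ρ⁻ = ρ⁺. Consequently, if the density of the phase carrying the shock jumps, the density of the other phase must jump as well. -/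
/-- Eliminating `pm - pp` with `h₁` turns `h₃` into `Ψm - Ψp = -(Q²/2)(1/ρm² - 1/ρp²)`,
while `h₂` says `Ψm - Ψp = +(Q²/2)(1/ρm² - 1/ρp²)`. -/
theorem eq_of_jump_relations {K : Type*} [Field K] [CharZero K] {Ψm Ψp ρm ρp pm pp Q : K}
    (h₁ : Q ^ 2 * (1 / ρm - 1 / ρp) + (pm - pp) = 0)
    (h₂ : Q ^ 2 / 2 * (1 / ρm ^ 2 - 1 / ρp ^ 2) - (Ψm - Ψp) = 0)
    (h₃ : (Ψm - Ψp) - 1 / 2 * (pm - pp) * (1 / ρp + 1 / ρm) = 0) :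
    Ψm = Ψp := by
  linear_combination (-1 / 2 : K) * h₂ + 1 / 2 * h₃ + (1 / ρp + 1 / ρm) / 4 * h₁

/-- Both phase densities must jump across a shock (appendix lemma): if Ψ is strictly
monotone increasing on (0,∞) and the reduced jump conditions hold, then ρ⁻ = ρ⁺. -/
theorem density_must_jump
    (Ψ : ℝ → ℝ) (hΨ : StrictMonoOn Ψ (Set.Ioi (0 : ℝ)))
    (ρm ρp : ℝ) (hρm : 0 < ρm) (hρp : 0 < ρp)
    (pm pp Q : ℝ)
    (h₁ : Q ^ 2 * (1 / ρm - 1 / ρp) + (pm - pp) = 0)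
    (h₂ : Q ^ 2 / 2 * (1 / ρm ^ 2 - 1 / ρp ^ 2) - (Ψ ρm - Ψ ρp) = 0)
    (h₃ : (Ψ ρm - Ψ ρp) - 1 / 2 * (pm - pp) * (1 / ρp + 1 / ρm) = 0) :
    ρm = ρp :=
  hΨ.injOn hρm hρp (eq_of_jump_relations h₁ h₂ h₃)
end

section
/- Admissibility of case (iii) shock-inside-rarefaction: let a : (0,∞) → ℝ be differentiable with a(r) > 0, and assume the Lagrangian wave speed g(r) := r·a(r) is strictly increasing on (0,∞). Let Ψ : (0,∞) → ℝ be differentiable with Ψ'(r) = a(r)²/r. Fix ρ⁺ > 0, set Q² := (ρ⁺·a(ρ⁺))², and define f(ρ) := Ψ(ρ⁺) − Ψ(ρ) + (Q²/2)(1/ρ⁺² − 1/ρ²). Then f(ρ) < 0 for all 0 < ρ < ρ⁺; i.e. the entropy jump term ⟦Ψ + ½(u−S)²⟧ is strictly negative, so the configuration satisfies the energy (entropy) inequality. -/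
/-!
Since `Ψ' = a² / r`, the jump term has derivative `f'(r) = (Q² − g(r)²) / r³`, where
`g(r) = r a(r)` is the Lagrangian wave speed. As `g` is positive and strictly increasing and
`Q² = g(ρ⁺)²`, `f` is strictly increasing on `(0, ρ⁺]`, and it vanishes at `ρ⁺`.
-/

open Set

theorem hasDerivAt_one_div_sq {r : ℝ} (hr : r ≠ 0) :
    HasDerivAt (fun x : ℝ => 1 / x ^ 2) (-2 / r ^ 3) r := by
  simpa only [one_div] using ((hasDerivAt_pow 2 r).fun_inv (pow_ne_zero 2 hr)).congr_deriv
    (by field_simp; ring : _ = -2 / r ^ 3)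

theorem hasDerivAt_entropyJump {a Ψ : ℝ → ℝ} {r : ℝ} (hr : r ≠ 0)
    (hΨ : HasDerivAt Ψ (a r ^ 2 / r) r) (c d Q : ℝ) :
    HasDerivAt (fun x => c - Ψ x + Q / 2 * (d - 1 / x ^ 2)) ((Q - (r * a r) ^ 2) / r ^ 3) r :=
  ((hΨ.const_sub c).fun_add
    (((hasDerivAt_one_div_sq hr).const_sub d).const_mul (Q / 2))).congr_deriv
      (by field_simp; ring)

theorem shock_in_rarefaction_case_iii_admissible_general
    (a : ℝ → ℝ)
    (hapos : ∀ r > (0 : ℝ), 0 < a r)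
    (hg : StrictMonoOn (fun r => r * a r) (Set.Ioi (0 : ℝ)))
    (Ψ : ℝ → ℝ) (hΨ : ∀ r > (0 : ℝ), HasDerivAt Ψ (a r ^ 2 / r) r)
    (ρp : ℝ) (hρp : 0 < ρp)
    (Qsq : ℝ) (hQsq : Qsq = (ρp * a ρp) ^ 2)
    (f : ℝ → ℝ)
    (hf : ∀ ρ, f ρ = Ψ ρp - Ψ ρ + Qsq / 2 * (1 / ρp ^ 2 - 1 / ρ ^ 2)) :
    ∀ ρ, 0 < ρ → ρ < ρp → f ρ < 0 := by
  intro ρ hρ hρρp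
  have hderiv : ∀ r > 0, HasDerivAt f ((Qsq - (r * a r) ^ 2) / r ^ 3) r := fun r hr =>
    funext hf ▸ hasDerivAt_entropyJump hr.ne' (hΨ r hr) _ _ _
  have hderiv_pos : ∀ r ∈ Ioo 0 ρp, 0 < (Qsq - (r * a r) ^ 2) / r ^ 3 := by
    rintro r ⟨hr, hrρp⟩
    have hsq : (r * a r) ^ 2 < Qsq :=
      hQsq ▸ pow_lt_pow_left₀ (hg hr hρp hrρp) (mul_pos hr (hapos r hr)).le two_ne_zero
    exact div_pos (sub_pos.2 hsq) (pow_pos hr 3)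
  have hmono : StrictMonoOn f (Ioc 0 ρp) := by
    refine strictMonoOn_of_hasDerivWithinAt_pos (f' := fun r => (Qsq - (r * a r) ^ 2) / r ^ 3)
      (convex_Ioc 0 ρp) (fun x hx => (hderiv x hx.1).continuousAt.continuousWithinAt) ?_ ?_ <;>
      rw [interior_Ioc]
    · exact fun x hx => (hderiv x hx.1).hasDerivWithinAt
    · exact hderiv_pos
  calc f ρ < f ρp := hmono ⟨hρ, hρρp.le⟩ ⟨hρp, le_rfl⟩ hρρp
    _ = 0 := by rw [hf]; ring

/-- Admissibility of the case (iii) shock-inside-rarefaction configuration: the entropy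
jump term f(ρ) = Ψ(ρ⁺) − Ψ(ρ) + (Q²/2)(1/ρ⁺² − 1/ρ²) with Q² = (ρ⁺ a(ρ⁺))² is strictly
negative for 0 < ρ < ρ⁺, so the configuration satisfies the entropy inequality. -/
theorem shock_in_rarefaction_case_iii_admissible
    (a : ℝ → ℝ) (hadiff : ∀ r > (0 : ℝ), DifferentiableAt ℝ a r)
    (hapos : ∀ r > (0 : ℝ), 0 < a r)
    (hg : StrictMonoOn (fun r => r * a r) (Set.Ioi (0 : ℝ)))
    (Ψ : ℝ → ℝ) (hΨ : ∀ r > (0 : ℝ), HasDerivAt Ψ (a r ^ 2 / r) r)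
    (ρp : ℝ) (hρp : 0 < ρp)
    (Qsq : ℝ) (hQsq : Qsq = (ρp * a ρp) ^ 2)
    (f : ℝ → ℝ)
    (hf : ∀ ρ, f ρ = Ψ ρp - Ψ ρ + Qsq / 2 * (1 / ρp ^ 2 - 1 / ρ ^ 2)) :
    ∀ ρ, 0 < ρ → ρ < ρp → f ρ < 0 :=
  shock_in_rarefaction_case_iii_admissible_general a hapos hg Ψ hΨ ρp hρp Qsq hQsq f hf
end

section
/- Reduction of the entropy (total energy) dissipation across a discontinuity: let α₁ ∈ (0,1), α₂ = 1−α₁, let ρᵢL, ρᵢR > 0, uᵢL, uᵢR, pᵢL, pᵢR, eᵢL, eᵢR (i = 1,2) and S be real numbers, set hᵢX := eᵢX + pᵢX/ρᵢX and assume continuity of the partial mass fluxes ρᵢL(uᵢL − S) = ρᵢR(uᵢR − S) =: −Qᵢ for i = 1,2 and the momentum jump condition −α₁Q₁⟦u₁⟧ + α₁⟦p₁⟧ − α₂Q₂⟦u₂⟧ + α₂⟦p₂⟧ = 0. Then Σᵢ₌₁² ( −S·⟦αᵢρᵢ(eᵢ + ½uᵢ²)⟧ + ⟦αᵢρᵢuᵢ(hᵢ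 + ½uᵢ²)⟧ ) = −Σᵢ₌₁² αᵢQᵢ·⟦hᵢ + ½(uᵢ − S)²⟧. -/
/-!
In the frame moving with the discontinuity, with mass flux `m = ρ (u - S)`, the energy flux of a
single state splits as `m (h + ½ (u - S)²) + S (m u + p) - ½ m S²`. Across the discontinuity `m`
is continuous in each phase, so the last term has no jump, and the jumps of `S (m u + p)`,
weighted by the volume fractions and summed over the phases, are `S` times the momentum jump
condition, hence vanish.
-/

theorem energy_flux_sub_eq {ρ u p e S : ℝ} (hρ : ρ ≠ 0) :
    ρ * u * ((e + p / ρ) + 1 / 2 * u ^ 2) - S * (ρ * (e + 1 / 2 * u ^ 2))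
      = ρ * (u - S) * ((e + p / ρ) + 1 / 2 * (u - S) ^ 2) + S * (ρ * (u - S) * u + p)
        - 1 / 2 * (ρ * (u - S)) * S ^ 2 := by
  field_simp
  ring

theorem phase_energy_dissipation_eq {α ρL ρR uL uR pL pR eL eR S Q : ℝ}
    (hρL : ρL ≠ 0) (hρR : ρR ≠ 0)
    (hQ : Q = -(ρL * (uL - S))) (hflux : ρL * (uL - S) = ρR * (uR - S)) :
    -S * (α * ρL * (eL + 1 / 2 * uL ^ 2) - α * ρR * (eR + 1 / 2 * uR ^ 2))
        + (α * ρL * uL * ((eL + pL / ρL) + 1 / 2 * uL ^ 2)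
          - α * ρR * uR * ((eR + pR / ρR) + 1 / 2 * uR ^ 2))
      = -(α * Q * (((eL + pL / ρL) + 1 / 2 * (uL - S) ^ 2)
          - ((eR + pR / ρR) + 1 / 2 * (uR - S) ^ 2)))
        + S * (-(α * Q) * (uL - uR) + α * (pL - pR)) := by
  have hL := energy_flux_sub_eq (u := uL) (p := pL) (e := eL) (S := S) hρL
  have hR := energy_flux_sub_eq (u := uR) (p := pR) (e := eR) (S := S) hρR
  rw [← hflux] at hR
  subst hQ
  linear_combination α * hL - α * hR

theorem entropy_dissipation_reduction_general
    (α₁ α₂ : ℝ)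
    (ρ₁L ρ₁R ρ₂L ρ₂R : ℝ)
    (hρ₁L : 0 < ρ₁L) (hρ₁R : 0 < ρ₁R) (hρ₂L : 0 < ρ₂L) (hρ₂R : 0 < ρ₂R)
    (u₁L u₁R u₂L u₂R p₁L p₁R p₂L p₂R e₁L e₁R e₂L e₂R S : ℝ)
    (h₁L h₁R h₂L h₂R : ℝ)
    (hh₁L : h₁L = e₁L + p₁L / ρ₁L) (hh₁R : h₁R = e₁R + p₁R / ρ₁R)
    (hh₂L : h₂L = e₂L + p₂L / ρ₂L) (hh₂R : h₂R = e₂R + p₂R / ρ₂R)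
    (Q₁ Q₂ : ℝ)
    (hQ₁ : Q₁ = -(ρ₁L * (u₁L - S))) (hQ₁' : ρ₁L * (u₁L - S) = ρ₁R * (u₁R - S))
    (hQ₂ : Q₂ = -(ρ₂L * (u₂L - S))) (hQ₂' : ρ₂L * (u₂L - S) = ρ₂R * (u₂R - S))
    (hmom : -(α₁ * Q₁) * (u₁L - u₁R) + α₁ * (p₁L - p₁R)
        - α₂ * Q₂ * (u₂L - u₂R) + α₂ * (p₂L - p₂R) = 0) :
    (-S * (α₁ * ρ₁L * (e₁L + 1 / 2 * u₁L ^ 2) - α₁ * ρ₁R * (e₁R + 1 / 2 * u₁R ^ 2))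
        + (α₁ * ρ₁L * u₁L * (h₁L + 1 / 2 * u₁L ^ 2) - α₁ * ρ₁R * u₁R * (h₁R + 1 / 2 * u₁R ^ 2)))
    + (-S * (α₂ * ρ₂L * (e₂L + 1 / 2 * u₂L ^ 2) - α₂ * ρ₂R * (e₂R + 1 / 2 * u₂R ^ 2))
        + (α₂ * ρ₂L * u₂L * (h₂L + 1 / 2 * u₂L ^ 2) - α₂ * ρ₂R * u₂R * (h₂R + 1 / 2 * u₂R ^ 2)))
    = -(α₁ * Q₁ * ((h₁L + 1 / 2 * (u₁L - S) ^ 2) - (h₁R + 1 / 2 * (u₁R - S) ^ 2))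
        + α₂ * Q₂ * ((h₂L + 1 / 2 * (u₂L - S) ^ 2) - (h₂R + 1 / 2 * (u₂R - S) ^ 2))) := by
  subst hh₁L hh₁R hh₂L hh₂R
  rw [phase_energy_dissipation_eq hρ₁L.ne' hρ₁R.ne' hQ₁ hQ₁',
    phase_energy_dissipation_eq hρ₂L.ne' hρ₂R.ne' hQ₂ hQ₂']
  linear_combination S * hmom

/-- Reduction of the entropy (total energy) dissipation across a discontinuity: given
continuity of the partial mass fluxes and the momentum jump condition, the total energy
dissipation equals −Σᵢ αᵢ Qᵢ ⟦hᵢ + ½(uᵢ − S)²⟧. -/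
theorem entropy_dissipation_reduction
    (α₁ α₂ : ℝ) (hα₁ : 0 < α₁) (hα₁' : α₁ < 1) (hα₂ : α₂ = 1 - α₁)
    (ρ₁L ρ₁R ρ₂L ρ₂R : ℝ)
    (hρ₁L : 0 < ρ₁L) (hρ₁R : 0 < ρ₁R) (hρ₂L : 0 < ρ₂L) (hρ₂R : 0 < ρ₂R)
    (u₁L u₁R u₂L u₂R p₁L p₁R p₂L p₂R e₁L e₁R e₂L e₂R S : ℝ)
    (h₁L h₁R h₂L h₂R : ℝ)
    (hh₁L : h₁L = e₁L + p₁L / ρ₁L) (hh₁R : h₁R = e₁R + p₁R / ρ₁R)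
    (hh₂L : h₂L = e₂L + p₂L / ρ₂L) (hh₂R : h₂R = e₂R + p₂R / ρ₂R)
    (Q₁ Q₂ : ℝ)
    (hQ₁ : Q₁ = -(ρ₁L * (u₁L - S))) (hQ₁' : ρ₁L * (u₁L - S) = ρ₁R * (u₁R - S))
    (hQ₂ : Q₂ = -(ρ₂L * (u₂L - S))) (hQ₂' : ρ₂L * (u₂L - S) = ρ₂R * (u₂R - S))
    (hmom : -(α₁ * Q₁) * (u₁L - u₁R) + α₁ * (p₁L - p₁R)
        - α₂ * Q₂ * (u₂L - u₂R) + α₂ * (p₂L - p₂R) = 0) :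
    (-S * (α₁ * ρ₁L * (e₁L + 1 / 2 * u₁L ^ 2) - α₁ * ρ₁R * (e₁R + 1 / 2 * u₁R ^ 2))
        + (α₁ * ρ₁L * u₁L * (h₁L + 1 / 2 * u₁L ^ 2) - α₁ * ρ₁R * u₁R * (h₁R + 1 / 2 * u₁R ^ 2)))
    + (-S * (α₂ * ρ₂L * (e₂L + 1 / 2 * u₂L ^ 2) - α₂ * ρ₂R * (e₂R + 1 / 2 * u₂R ^ 2))
        + (α₂ * ρ₂L * u₂L * (h₂L + 1 / 2 * u₂L ^ 2) - α₂ * ρ₂R * u₂R * (h₂R + 1 / 2 * u₂R ^ 2)))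
    = -(α₁ * Q₁ * ((h₁L + 1 / 2 * (u₁L - S) ^ 2) - (h₁R + 1 / 2 * (u₁R - S) ^ 2))
        + α₂ * Q₂ * ((h₂L + 1 / 2 * (u₂L - S) ^ 2) - (h₂R + 1 / 2 * (u₂R - S) ^ 2))) :=
  entropy_dissipation_reduction_general α₁ α₂ ρ₁L ρ₁R ρ₂L ρ₂R hρ₁L hρ₁R hρ₂L hρ₂R u₁L u₁R u₂L u₂R
    p₁L p₁R p₂L p₂R e₁L e₁R e₂L e₂R S h₁L h₁R h₂L h₂R hh₁L hh₁R hh₂L hh₂R Q₁ Q₂ hQ₁ hQ₁' hQ₂ hQ₂'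
    hmom
end
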